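/- (Monotonicity Lemma) Let 0 ≤ α < n, 0 < δ ≤ 1, and let K(x,y) be an α-standard fractional kernel of order 1+δ with constant C_CZ. Let ω be a positive locally finite Borel measure on ℝⁿ, let J be a cube with 0 < ω(J) < ∞, and let μ be a positive locally finite Borel measure with supp μ ∩ 2J = ∅ and P^α(J,μ) < ∞. Set m_J := ω(J)^{−1} ∫_J x dω(x). Then for every h ∈ L²(ω) supported in J with ∫ h dω = 0, the iterated integral ∫ ( ∫_J (K(x,y) − K(m_J,y)) h(x) dω(x) ) dμ(y) converges absolutely and satisfies: |∫ ( ∫_J (K(x,y) − K(m_J,y)) h(x) dω(x) ) dμ(y)| ≤ C·C_CZ·[ (P^α(J,μ)/ℓ(J)) · |∫_J (x − m_J) h(x) dω(x)|_{ℝⁿ} + (P^α_{1+δ}(J,μ)/ℓ(J)) · ∫_J |x − m_J| |h(x)| dω(x) ], where C depends only on n, α and δ. (When moreover ∫ (ℓ(J)+|y−c_J|)^{α−n} dμ(y) < ∞, the left-hand side equals ∫∫ K(x,y) h(x) dω(x) dμ(y).) -/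

import Mathlib

/-!
Write `F(y) = ∫_J (K(x,y) − K(m_J,y)) h(x) dω(x)` and take `y ∉ 2J`, so that every point of `J`
lies at distance `≍ ℓ(J) + |y − c_J|` from `y`. Taylor-expanding `K(·,y)` at `m_J`, the linear
term integrates to `∇ₓK(m_J,y) · ∫_J h(x)(x − m_J) dω`, of size `C_CZ (ℓ(J) + |y − c_J|)^{α−n−1}`,
and the remainder is `≲ C_CZ ℓ(J)^δ (ℓ(J) + |y − c_J|)^{α−n−1−δ} |x − m_J|`: by the Hölder bound on
`∇ₓK` along the segment `[m_J, x]` when `x` is close to `m_J` compared with `y`, and by the size of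
`∇ₓK` on all of `J` otherwise. These two weights are the integrands of `P^α(J,μ)/ℓ(J)` and
`P^α_{1+δ}(J,μ)/ℓ(J)`, and `μ` lives off `2J`. Since `∫_J h dω = 0`, `F(y) = ∫_J K(x,y) h(x) dω`,
which is continuous off the closure of `J` by dominated convergence; this gives the
measurability of `F` and the final identity.
-/

open MeasureTheory
open scoped ENNReal NNReal

noncomputable section

/-- An axis-parallel half-open cube in `ℝⁿ`, given by its corner `a` and side length `l`. -/
structure QCube (n : ℕ) where
  a : Fin n → ℝ
  l : ℝ

/-- The half-open cube as a subset of `ℝⁿ`. -/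
def QCube.pts {n : ℕ} (Q : QCube n) : Set (EuclideanSpace ℝ (Fin n)) :=
  {x | ∀ i, Q.a i ≤ x i ∧ x i < Q.a i + Q.l}

/-- The center of a cube. -/
def QCube.center {n : ℕ} (Q : QCube n) : EuclideanSpace ℝ (Fin n) :=
  (EuclideanSpace.equiv (Fin n) ℝ).symm fun i => Q.a i + Q.l / 2

/-- The concentric dilate `γQ` of a cube `Q`. -/
def QCube.dilate {n : ℕ} (Q : QCube n) (γ : ℝ) : QCube n :=
  ⟨fun i => Q.a i + Q.l / 2 - γ * Q.l / 2, γ * Q.l⟩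

/-- The `m`-weighted `α`-fractional Poisson integral
`P^α_m(Q,μ) = ∫ ℓ(Q)^m / (ℓ(Q)+|y−c_Q|)^{n+m−α} dμ(y)`; `P^α = P^α_1`. -/
def poissonM {n : ℕ} (α m : ℝ) (Q : QCube n)
    (μ : Measure (EuclideanSpace ℝ (Fin n))) : ℝ≥0∞ :=
  ∫⁻ y, ENNReal.ofReal (Q.l ^ m / (Q.l + dist y Q.center) ^ ((n : ℝ) + m - α)) ∂μ

/-- `K` is an `α`-standard fractional kernel of order `1+δ` with constant `CCZ`. -/
def IsStandardKernel (n : ℕ) (α δ CCZ : ℝ)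
    (K : EuclideanSpace ℝ (Fin n) → EuclideanSpace ℝ (Fin n) → ℝ) : Prop :=
  (∀ y, ContDiffOn ℝ 1 (fun x => K x y) {y}ᶜ) ∧
  (∀ x, ContDiffOn ℝ 1 (fun y => K x y) {x}ᶜ) ∧
  (∀ x y, x ≠ y → |K x y| ≤ CCZ * ‖x - y‖ ^ (α - (n : ℝ))) ∧
  (∀ x y, x ≠ y →
    ‖fderiv ℝ (fun z => K z y) x‖ + ‖fderiv ℝ (fun z => K x z) y‖
      ≤ CCZ * ‖x - y‖ ^ (α - (n : ℝ) - 1)) ∧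
  (∀ x x' y, x ≠ y → ‖x - x'‖ ≤ 1 / 2 * ‖x - y‖ →
    ‖fderiv ℝ (fun z => K z y) x - fderiv ℝ (fun z => K z y) x'‖
      ≤ CCZ * (‖x - x'‖ / ‖x - y‖) ^ δ * ‖x - y‖ ^ (α - (n : ℝ) - 1)) ∧
  (∀ x y y', x ≠ y → ‖y - y'‖ ≤ 1 / 2 * ‖x - y‖ →
    ‖fderiv ℝ (fun z => K x z) y - fderiv ℝ (fun z => K x z) y'‖
      ≤ CCZ * (‖y - y'‖ / ‖x - y‖) ^ δ * ‖x - y‖ ^ (α - (n : ℝ) - 1))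

/-- The `ω`-mean `m_J = ω(J)^{−1} ∫_J x dω(x)` of the identity over a cube `J`. -/
def wMean {n : ℕ} (ω : Measure (EuclideanSpace ℝ (Fin n))) (J : QCube n) :
    EuclideanSpace ℝ (Fin n) :=
  (ω J.pts).toReal⁻¹ • ∫ x in J.pts, x ∂ω

open Set Topology

namespace EuclideanSpace

variable {n : ℕ}

lemma abs_apply_le_norm (x : EuclideanSpace ℝ (Fin n)) (i : Fin n) : |x i| ≤ ‖x‖ :=
  (Real.norm_eq_abs _).symm.trans_le (PiLp.norm_apply_le x i)

lemma norm_le_sqrt_mul_of_abs_apply_le {x : EuclideanSpace ℝ (Fin n)} {r : ℝ} (hr : 0 ≤ r)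
    (h : ∀ i, |x i| ≤ r) : ‖x‖ ≤ √n * r := by
  have hsum : ∑ i, ‖x i‖ ^ 2 ≤ n * r ^ 2 := by
    calc ∑ i, ‖x i‖ ^ 2 ≤ ∑ _i : Fin n, r ^ 2 :=
          Finset.sum_le_sum fun i _ => by
            rw [Real.norm_eq_abs]; exact pow_le_pow_left₀ (abs_nonneg _) (h i) 2
      _ = n * r ^ 2 := by simp
  rw [EuclideanSpace.norm_eq, ← Real.sqrt_sq hr, ← Real.sqrt_mul (Nat.cast_nonneg n)]
  exact Real.sqrt_le_sqrt hsum

end EuclideanSpace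

namespace QCube

variable {n : ℕ}

def closedPts (Q : QCube n) : Set (EuclideanSpace ℝ (Fin n)) :=
  {x | ∀ i, Q.a i ≤ x i ∧ x i ≤ Q.a i + Q.l}

lemma closedPts_eq_iInter (Q : QCube n) :
    Q.closedPts = ⋂ i, (EuclideanSpace.proj (𝕜 := ℝ) i) ⁻¹' Icc (Q.a i) (Q.a i + Q.l) := by
  ext x; simp [closedPts]

lemma isClosed_closedPts (Q : QCube n) : IsClosed Q.closedPts := by
  rw [closedPts_eq_iInter]
  exact isClosed_iInter fun i => isClosed_Icc.preimage (EuclideanSpace.proj i).continuous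

lemma convex_closedPts (Q : QCube n) : Convex ℝ Q.closedPts := by
  rw [closedPts_eq_iInter]
  exact convex_iInter fun i => (convex_Icc _ _).linear_preimage (EuclideanSpace.proj i).toLinearMap

lemma measurableSet_pts (Q : QCube n) : MeasurableSet Q.pts := by
  have : Q.pts = ⋂ i, (EuclideanSpace.proj (𝕜 := ℝ) i) ⁻¹' Ico (Q.a i) (Q.a i + Q.l) := by
    ext x; simp [pts]
  rw [this]
  exact MeasurableSet.iInter fun i =>
    measurableSet_Ico.preimage (EuclideanSpace.proj i).continuous.measurable

lemma pts_subset_closedPts (Q : QCube n) : Q.pts ⊆ Q.closedPts :=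
  fun _ hx i => ⟨(hx i).1, (hx i).2.le⟩

lemma abs_apply_sub_center_le {Q : QCube n} {x : EuclideanSpace ℝ (Fin n)}
    (hx : x ∈ Q.closedPts) (i : Fin n) : |x i - Q.center i| ≤ Q.l / 2 := by
  have := hx i
  rw [show Q.center i = Q.a i + Q.l / 2 from rfl, abs_le]
  constructor <;> linarith

lemma norm_sub_center_le {Q : QCube n} (hl : 0 ≤ Q.l) {x : EuclideanSpace ℝ (Fin n)}
    (hx : x ∈ Q.closedPts) : ‖x - Q.center‖ ≤ √n * (Q.l / 2) :=
  EuclideanSpace.norm_le_sqrt_mul_of_abs_apply_le (by linarith) (abs_apply_sub_center_le hx)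

lemma norm_sub_le_of_mem_closedPts {Q : QCube n} (hl : 0 ≤ Q.l) {x x' : EuclideanSpace ℝ (Fin n)}
    (hx : x ∈ Q.closedPts) (hx' : x' ∈ Q.closedPts) : ‖x - x'‖ ≤ √n * Q.l := by
  refine EuclideanSpace.norm_le_sqrt_mul_of_abs_apply_le hl fun i => ?_
  have := hx i; have := hx' i
  rw [PiLp.sub_apply, abs_le]
  constructor <;> linarith

lemma exists_le_abs_apply_sub_center {Q : QCube n} {y : EuclideanSpace ℝ (Fin n)}
    (hy : y ∉ (Q.dilate 2).pts) : ∃ i, Q.l ≤ |y i - Q.center i| := by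
  simp only [pts, dilate, mem_ofPred_eq, not_forall, not_and_or, not_le, not_lt] at hy
  obtain ⟨i, hi⟩ := hy
  refine ⟨i, ?_⟩
  rw [show Q.center i = Q.a i + Q.l / 2 from rfl]
  rcases hi with hi | hi
  · exact le_abs.mpr (Or.inr (by linarith))
  · exact le_abs.mpr (Or.inl (by linarith))

lemma half_le_norm_sub {Q : QCube n} {x y : EuclideanSpace ℝ (Fin n)}
    (hx : x ∈ Q.closedPts) (hy : y ∉ (Q.dilate 2).pts) : Q.l / 2 ≤ ‖x - y‖ := by
  obtain ⟨i, hi⟩ := exists_le_abs_apply_sub_center hy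
  have hx := abs_le.mp (abs_apply_sub_center_le hx i)
  refine le_trans ?_
    ((EuclideanSpace.abs_apply_le_norm (x - y) i).trans_eq' (by rw [PiLp.sub_apply]))
  rcases le_abs.mp hi with hi | hi
  · exact le_abs.mpr (Or.inr (by linarith))
  · exact le_abs.mpr (Or.inl (by linarith))

def separationConst (n : ℕ) : ℝ := 1 / (2 * (2 + √n))

lemma separationConst_pos (n : ℕ) : 0 < separationConst n := by
  unfold separationConst; positivity

lemma separationConst_mul_le_norm_sub {Q : QCube n} (hl : 0 ≤ Q.l) {x y : EuclideanSpace ℝ (Fin n)}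
    (hx : x ∈ Q.closedPts) (hy : y ∉ (Q.dilate 2).pts) :
    separationConst n * (Q.l + ‖y - Q.center‖) ≤ ‖x - y‖ := by
  have hnear := half_le_norm_sub hx hy
  have hfar : ‖y - Q.center‖ ≤ ‖x - y‖ + √n * (Q.l / 2) := by
    calc ‖y - Q.center‖ ≤ ‖y - x‖ + ‖x - Q.center‖ := norm_sub_le_norm_sub_add_norm_sub _ _ _
      _ ≤ ‖x - y‖ + √n * (Q.l / 2) := by
        rw [norm_sub_rev]; exact add_le_add_right (norm_sub_center_le hl hx) _
  have hs := Real.sqrt_nonneg n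
  -- add `hnear` with weight `1 + √n` to `hfar` with weight `2`
  rw [separationConst, div_mul_eq_mul_div, one_mul, div_le_iff₀ (by positivity)]
  nlinarith [mul_nonneg hs (by linarith : 0 ≤ 2 * ‖x - y‖ - Q.l)]

lemma notMem_closure_pts {Q : QCube n} (hl : 0 < Q.l) {y : EuclideanSpace ℝ (Fin n)}
    (hy : y ∉ (Q.dilate 2).pts) : y ∉ closure Q.pts := fun hy' => by
  have := half_le_norm_sub (closure_minimal Q.pts_subset_closedPts Q.isClosed_closedPts hy') hy
  simp at this; linarith

end QCube

lemma ae_notMem_of_locally_null {X : Type*} [TopologicalSpace X] [SecondCountableTopology X]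
    [MeasurableSpace X] {μ : Measure X} {s : Set X} (hs : ∀ x ∈ s, ∃ U ∈ 𝓝 x, μ U = 0) :
    ∀ᵐ y ∂μ, y ∉ s :=
  measure_eq_zero_iff_ae_notMem.mp <| measure_null_of_locally_null s fun x hx =>
    let ⟨U, hU, hU0⟩ := hs x hx
    ⟨U, nhdsWithin_le_nhds hU, hU0⟩


lemma wMean_mem_closedPts {n : ℕ} {ω : Measure (EuclideanSpace ℝ (Fin n))} {J : QCube n}
    (hl : 0 ≤ J.l) (h0 : ω J.pts ≠ 0) (hfin : ω J.pts ≠ ⊤) : wMean ω J ∈ J.closedPts := by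
  have hmem : ∀ᵐ x ∂ω.restrict J.pts, x ∈ J.closedPts :=
    ae_restrict_of_forall_mem J.measurableSet_pts J.pts_subset_closedPts
  have hint : IntegrableOn (fun x => x) J.pts ω := by
    refine Measure.integrableOn_of_bounded hfin aestronglyMeasurable_id
      (M := ‖J.center‖ + √n * (J.l / 2)) (hmem.mono fun x hx => ?_)
    calc ‖x‖ = ‖J.center + (x - J.center)‖ := by rw [add_sub_cancel]
      _ ≤ ‖J.center‖ + √n * (J.l / 2) :=
        (norm_add_le _ _).trans (add_le_add_right (QCube.norm_sub_center_le hl hx) _)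
  have := J.convex_closedPts.set_average_mem J.isClosed_closedPts h0 hfin hmem hint
  rwa [setAverage_eq] at this

namespace IsStandardKernel

variable {n : ℕ} {α δ CCZ : ℝ} {K : EuclideanSpace ℝ (Fin n) → EuclideanSpace ℝ (Fin n) → ℝ}
  {x y z m : EuclideanSpace ℝ (Fin n)} {S : Set (EuclideanSpace ℝ (Fin n))} {r : ℝ}

lemma differentiableAt_left (hK : IsStandardKernel n α δ CCZ K) (hz : z ≠ y) :
    DifferentiableAt ℝ (fun w => K w y) z :=
  ((hK.1 y).contDiffAt (isOpen_compl_singleton.mem_nhds hz)).differentiableAt one_ne_zero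

lemma continuousAt_right (hK : IsStandardKernel n α δ CCZ K) (hx : y ≠ x) :
    ContinuousAt (fun w => K x w) y :=
  (hK.2.1 x).continuousOn.continuousAt (isOpen_compl_singleton.mem_nhds hx)

lemma continuousOn_left (hK : IsStandardKernel n α δ CCZ K) (hy : y ∉ S) :
    ContinuousOn (fun x => K x y) S :=
  (hK.1 y).continuousOn.mono fun x hx (hxy : x = y) => hy (hxy ▸ hx)

lemma abs_le_of_le_norm_sub (hK : IsStandardKernel n α δ CCZ K) (hα : α ≤ n) (hCCZ : 0 ≤ CCZ)
    (hr : 0 < r) (hxy : r ≤ ‖x - y‖) : |K x y| ≤ CCZ * r ^ (α - n) := by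
  have hne : x ≠ y := fun h => by simp [h] at hxy; linarith
  exact (hK.2.2.1 x y hne).trans <| mul_le_mul_of_nonneg_left
    (Real.rpow_le_rpow_of_nonpos hr hxy (by linarith)) hCCZ

lemma norm_fderiv_left_le (hK : IsStandardKernel n α δ CCZ K) (hα : α ≤ n + 1) (hCCZ : 0 ≤ CCZ)
    (hr : 0 < r) (hzy : r ≤ ‖z - y‖) :
    ‖fderiv ℝ (fun w => K w y) z‖ ≤ CCZ * r ^ (α - n - 1) := by
  have hne : z ≠ y := fun h => by simp [h] at hzy; linarith
  calc ‖fderiv ℝ (fun w => K w y) z‖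
      ≤ ‖fderiv ℝ (fun w => K w y) z‖ + ‖fderiv ℝ (fun w => K z w) y‖ :=
        le_add_of_nonneg_right (norm_nonneg _)
    _ ≤ CCZ * ‖z - y‖ ^ (α - n - 1) := hK.2.2.2.1 z y hne
    _ ≤ CCZ * r ^ (α - n - 1) :=
        mul_le_mul_of_nonneg_left (Real.rpow_le_rpow_of_nonpos hr hzy (by linarith)) hCCZ

/-- Mean value inequality on the segment `[m, x]`, along which `∇ₓK(·, y)` stays within the
`δ`-Hölder bound of `∇ₓK(m, y)` because the segment is far from `y`. -/
lemma abs_taylor_le_of_near (hK : IsStandardKernel n α δ CCZ K) (hα : α ≤ n + 1 + δ)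
    (hδ : 0 ≤ δ) (hCCZ : 0 ≤ CCZ) (hS : Convex ℝ S) {ρ : ℝ} (hρ : 0 < ρ)
    (hSy : ∀ z ∈ S, ρ ≤ ‖z - y‖) (hm : m ∈ S) (hx : x ∈ S) (hxm : ‖x - m‖ ≤ ρ / 2) :
    |K x y - K m y - fderiv ℝ (fun z => K z y) m (x - m)|
      ≤ CCZ * ‖x - m‖ ^ δ * ρ ^ (α - n - 1 - δ) * ‖x - m‖ := by
  have hgrad : ∀ z ∈ segment ℝ m x,
      ‖fderiv ℝ (fun w => K w y) z - fderiv ℝ (fun w => K w y) m‖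
        ≤ CCZ * ‖x - m‖ ^ δ * ρ ^ (α - n - 1 - δ) := by
    intro z hz
    have hzS := hS.segment_subset hm hx hz
    have hzy := hSy z hzS
    have hzy0 : 0 < ‖z - y‖ := hρ.trans_le hzy
    have hzm : ‖z - m‖ ≤ ‖x - m‖ := norm_sub_le_of_mem_segment hz
    have hne : z ≠ y := fun h => by simp [h] at hzy0
    calc ‖fderiv ℝ (fun w => K w y) z - fderiv ℝ (fun w => K w y) m‖
        ≤ CCZ * (‖z - m‖ / ‖z - y‖) ^ δ * ‖z - y‖ ^ (α - n - 1) :=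
          hK.2.2.2.2.1 z m y hne (by linarith : ‖z - m‖ ≤ 1 / 2 * ‖z - y‖)
      _ ≤ CCZ * (‖x - m‖ / ‖z - y‖) ^ δ * ‖z - y‖ ^ (α - n - 1) := by gcongr
      _ = CCZ * ‖x - m‖ ^ δ * ‖z - y‖ ^ (α - n - 1 - δ) := by
          rw [Real.div_rpow (norm_nonneg _) hzy0.le, Real.rpow_sub hzy0 _ δ]
          field_simp
      _ ≤ CCZ * ‖x - m‖ ^ δ * ρ ^ (α - n - 1 - δ) :=
          mul_le_mul_of_nonneg_left (Real.rpow_le_rpow_of_nonpos hρ hzy (by linarith))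
            (by positivity)
  simpa [Real.norm_eq_abs] using (convex_segment m x).norm_image_sub_le_of_norm_fderiv_le'
    (fun z hz => hK.differentiableAt_left fun h => by
      have := hSy z (hS.segment_subset hm hx hz); simp [h] at this; linarith)
    hgrad (left_mem_segment ℝ m x) (right_mem_segment ℝ m x)

lemma abs_taylor_le_of_far (hK : IsStandardKernel n α δ CCZ K) (hα : α ≤ n + 1)
    (hCCZ : 0 ≤ CCZ) (hS : Convex ℝ S) {ρ : ℝ} (hρ : 0 < ρ)
    (hSy : ∀ z ∈ S, ρ ≤ ‖z - y‖) (hm : m ∈ S) (hx : x ∈ S) :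
    |K x y - K m y - fderiv ℝ (fun z => K z y) m (x - m)|
      ≤ 2 * CCZ * ρ ^ (α - n - 1) * ‖x - m‖ := by
  have hgrad : ∀ z ∈ S, ‖fderiv ℝ (fun w => K w y) z‖ ≤ CCZ * ρ ^ (α - n - 1) :=
    fun z hz => hK.norm_fderiv_left_le hα hCCZ hρ (hSy z hz)
  have hdiff : |K x y - K m y| ≤ CCZ * ρ ^ (α - n - 1) * ‖x - m‖ := by
    simpa [Real.norm_eq_abs] using hS.norm_image_sub_le_of_norm_fderiv_le
      (fun z hz => hK.differentiableAt_left fun h => by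
        have := hSy z hz; simp [h] at this; linarith) hgrad hm hx
  have hlin : |fderiv ℝ (fun z => K z y) m (x - m)| ≤ CCZ * ρ ^ (α - n - 1) * ‖x - m‖ := by
    rw [← Real.norm_eq_abs]
    exact (ContinuousLinearMap.le_opNorm _ _).trans
      (mul_le_mul_of_nonneg_right (hgrad m hm) (norm_nonneg _))
  linarith [abs_sub (K x y - K m y) (fderiv ℝ (fun z => K z y) m (x - m))]

lemma abs_taylor_le (hK : IsStandardKernel n α δ CCZ K) (hα : α ≤ n + 1)
    (hδ : 0 ≤ δ) (hCCZ : 0 ≤ CCZ) (hS : Convex ℝ S) {ρ : ℝ} (hρ : 0 < ρ)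
    (hSy : ∀ z ∈ S, ρ ≤ ‖z - y‖) (hm : m ∈ S) (hx : x ∈ S) :
    |K x y - K m y - fderiv ℝ (fun z => K z y) m (x - m)|
      ≤ 2 * CCZ * (2 * ‖x - m‖) ^ δ * ρ ^ (α - n - 1 - δ) * ‖x - m‖ := by
  have hsplit : ρ ^ (α - n - 1) = ρ ^ (α - n - 1 - δ) * ρ ^ δ := by
    rw [← Real.rpow_add hρ]; ring_nf
  rcases le_or_gt ‖x - m‖ (ρ / 2) with hnear | hfar
  · refine (hK.abs_taylor_le_of_near (by linarith) hδ hCCZ hS hρ hSy hm hx hnear).trans ?_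
    have : ‖x - m‖ ^ δ ≤ (2 * ‖x - m‖) ^ δ := by gcongr; linarith [norm_nonneg (x - m)]
    have : 0 ≤ ρ ^ (α - n - 1 - δ) := by positivity
    gcongr
    linarith [norm_nonneg (x - m)]
  · refine (hK.abs_taylor_le_of_far hα hCCZ hS hρ hSy hm hx).trans ?_
    rw [hsplit]
    have : ρ ^ δ ≤ (2 * ‖x - m‖) ^ δ := by gcongr; linarith
    have : 0 ≤ ρ ^ (α - n - 1 - δ) := by positivity
    calc 2 * CCZ * (ρ ^ (α - n - 1 - δ) * ρ ^ δ) * ‖x - m‖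
        = 2 * CCZ * ρ ^ δ * ρ ^ (α - n - 1 - δ) * ‖x - m‖ := by ring
      _ ≤ 2 * CCZ * (2 * ‖x - m‖) ^ δ * ρ ^ (α - n - 1 - δ) * ‖x - m‖ := by gcongr

variable {ω : Measure (EuclideanSpace ℝ (Fin n))} {h : EuclideanSpace ℝ (Fin n) → ℝ}

lemma integrableOn_mul (hK : IsStandardKernel n α δ CCZ K) (hα : α ≤ n) (hCCZ : 0 ≤ CCZ)
    (hS : MeasurableSet S) (hh : IntegrableOn h S ω) (hr : 0 < r)
    (hSy : ∀ x ∈ S, r ≤ ‖x - y‖) : IntegrableOn (fun x => K x y * h x) S ω := by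
  have hy : y ∉ S := fun hyS => by simpa using (hr.trans_le (hSy y hyS))
  refine hh.bdd_mul ((hK.continuousOn_left hy).aestronglyMeasurable hS)
    (c := CCZ * r ^ (α - n)) ((ae_restrict_iff' hS).mpr (ae_of_all _ fun x hx => ?_))
  rw [Real.norm_eq_abs]
  exact hK.abs_le_of_le_norm_sub hα hCCZ hr (hSy x hx)

lemma continuousAt_setIntegral_mul (hK : IsStandardKernel n α δ CCZ K) (hα : α ≤ n)
    (hCCZ : 0 ≤ CCZ) (hS : MeasurableSet S) (hh : IntegrableOn h S ω)
    {y₀ : EuclideanSpace ℝ (Fin n)} (hy₀ : y₀ ∉ closure S) :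
    ContinuousAt (fun y => ∫ x in S, K x y * h x ∂ω) y₀ := by
  obtain ⟨ε, hε, hball⟩ := Metric.mem_nhds_iff.mp (isClosed_closure.isOpen_compl.mem_nhds hy₀)
  have hsep : ∀ y ∈ Metric.ball y₀ (ε / 2), ∀ x ∈ S, ε / 2 ≤ ‖x - y‖ := by
    intro y hy x hx
    have hx₀ : ε ≤ dist x y₀ := not_lt.mp fun h => hball h (subset_closure hx)
    rw [Metric.mem_ball] at hy
    rw [← dist_eq_norm]
    linarith [dist_triangle x y y₀]
  have hnear : ∀ᶠ y in 𝓝 y₀, y ∈ Metric.ball y₀ (ε / 2) := Metric.ball_mem_nhds y₀ (by linarith)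
  refine continuousAt_of_dominated (bound := fun x => CCZ * (ε / 2) ^ (α - n) * ‖h x‖)
    (hnear.mono fun y hy =>
      (hK.integrableOn_mul hα hCCZ hS hh (by linarith) (hsep y hy)).aestronglyMeasurable)
    (hnear.mono fun y hy => (ae_restrict_iff' hS).mpr (ae_of_all _ fun x hx => ?_))
    (hh.norm.const_mul _) ((ae_restrict_iff' hS).mpr (ae_of_all _ fun x hx => ?_))
  · rw [norm_mul, Real.norm_eq_abs]
    exact mul_le_mul_of_nonneg_right
      (hK.abs_le_of_le_norm_sub hα hCCZ (by linarith) (hsep y hy x hx)) (norm_nonneg _)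
  · have hne : y₀ ≠ x := fun h => by
      have := hsep y₀ (Metric.mem_ball_self (by linarith)) x hx
      simp [h] at this; linarith
    exact (hK.continuousAt_right hne).mul continuousAt_const

lemma aestronglyMeasurable_setIntegral_mul (hK : IsStandardKernel n α δ CCZ K) (hα : α ≤ n)
    (hCCZ : 0 ≤ CCZ) (hS : MeasurableSet S) (hh : IntegrableOn h S ω)
    {μ : Measure (EuclideanSpace ℝ (Fin n))} (hμ : ∀ᵐ y ∂μ, y ∉ closure S) :
    AEStronglyMeasurable (fun y => ∫ x in S, K x y * h x ∂ω) μ := by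
  have hU : μ.restrict (closure S)ᶜ = μ := Measure.restrict_eq_self_of_ae_mem hμ
  rw [← hU]
  exact ContinuousOn.aestronglyMeasurable
    (fun y hy => (hK.continuousAt_setIntegral_mul hα hCCZ hS hh hy).continuousWithinAt)
    isClosed_closure.isOpen_compl.measurableSet

end IsStandardKernel

section Poisson

variable {n : ℕ} {α m : ℝ} {Q : QCube n} {μ : Measure (EuclideanSpace ℝ (Fin n))}

def poissonIntegrand (α m : ℝ) (Q : QCube n) (y : EuclideanSpace ℝ (Fin n)) : ℝ :=
  Q.l ^ m / (Q.l + dist y Q.center) ^ ((n : ℝ) + m - α)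

lemma poissonM_eq_lintegral :
    poissonM α m Q μ = ∫⁻ y, ENNReal.ofReal (poissonIntegrand α m Q y) ∂μ :=
  rfl

lemma poissonIntegrand_nonneg (hl : 0 ≤ Q.l) (y : EuclideanSpace ℝ (Fin n)) :
    0 ≤ poissonIntegrand α m Q y := by
  unfold poissonIntegrand; positivity

lemma continuous_poissonIntegrand (hl : 0 < Q.l) : Continuous (poissonIntegrand α m Q) :=
  continuous_const.div
    ((continuous_const.add (continuous_id.dist continuous_const)).rpow_const fun _ =>
      Or.inl (add_pos_of_pos_of_nonneg hl dist_nonneg).ne')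
    fun _ => (Real.rpow_pos_of_pos (add_pos_of_pos_of_nonneg hl dist_nonneg) _).ne'

lemma poissonIntegrand_div_eq (hl : 0 < Q.l) (y : EuclideanSpace ℝ (Fin n)) :
    poissonIntegrand α m Q y / Q.l = Q.l ^ (m - 1) * (Q.l + ‖y - Q.center‖) ^ (α - n - m) := by
  have hR : 0 < Q.l + ‖y - Q.center‖ := add_pos_of_pos_of_nonneg hl (norm_nonneg _)
  rw [poissonIntegrand, dist_eq_norm, Real.rpow_sub hl, Real.rpow_one,
    show α - n - m = -((n : ℝ) + m - α) by ring, Real.rpow_neg hR.le]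
  field_simp

lemma poissonIntegrand_le_of_le (hl : 0 < Q.l) {m' : ℝ} (hm : m ≤ m')
    (y : EuclideanSpace ℝ (Fin n)) :
    poissonIntegrand α m' Q y ≤ poissonIntegrand α m Q y := by
  set R := Q.l + dist y Q.center with hRdef
  have hR : 0 < R := add_pos_of_pos_of_nonneg hl dist_nonneg
  have hratio : (Q.l / R) ^ (m' - m) ≤ 1 :=
    Real.rpow_le_one (by positivity) ((div_le_one hR).mpr (by simp [R, dist_nonneg]))
      (by linarith)
  have hfactor : poissonIntegrand α m' Q y = poissonIntegrand α m Q y * (Q.l / R) ^ (m' - m) := by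
    rw [poissonIntegrand, poissonIntegrand, ← hRdef, Real.div_rpow hl.le hR.le,
      show m' = m + (m' - m) by ring, Real.rpow_add hl,
      show (n : ℝ) + (m + (m' - m)) - α = ((n : ℝ) + m - α) + (m' - m) by ring,
      Real.rpow_add hR]
    ring_nf
  rw [hfactor]
  exact mul_le_of_le_one_right (poissonIntegrand_nonneg hl.le y) hratio

lemma poissonM_ne_top_of_le (hl : 0 < Q.l) {m' : ℝ} (hm : m ≤ m') (h : poissonM α m Q μ ≠ ⊤) :
    poissonM α m' Q μ ≠ ⊤ :=
  ne_top_of_le_ne_top h <| by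
    rw [poissonM_eq_lintegral, poissonM_eq_lintegral]
    exact lintegral_mono fun y => ENNReal.ofReal_le_ofReal (poissonIntegrand_le_of_le hl hm y)

lemma integrable_poissonIntegrand (hl : 0 < Q.l) (h : poissonM α m Q μ ≠ ⊤) :
    Integrable (poissonIntegrand α m Q) μ := by
  refine ⟨(continuous_poissonIntegrand hl).aestronglyMeasurable, ?_⟩
  rw [hasFiniteIntegral_iff_ofReal (ae_of_all _ (poissonIntegrand_nonneg hl.le)),
    ← poissonM_eq_lintegral]
  exact h.lt_top

lemma integral_poissonIntegrand (hl : 0 < Q.l) :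
    ∫ y, poissonIntegrand α m Q y ∂μ = (poissonM α m Q μ).toReal := by
  rw [poissonM_eq_lintegral]
  exact integral_eq_lintegral_of_nonneg_ae (ae_of_all _ (poissonIntegrand_nonneg hl.le))
    (continuous_poissonIntegrand hl).aestronglyMeasurable

lemma integrable_poissonIntegrand_combination (hl : 0 < Q.l) {m' : ℝ}
    (h : poissonM α m Q μ ≠ ⊤) (h' : poissonM α m' Q μ ≠ ⊤) (a b c : ℝ) :
    Integrable (fun y =>
      c * (poissonIntegrand α m Q y / Q.l * a + poissonIntegrand α m' Q y / Q.l * b)) μ :=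
  ((((integrable_poissonIntegrand hl h).div_const _).mul_const _).add
    (((integrable_poissonIntegrand hl h').div_const _).mul_const _)).const_mul _

lemma integral_poissonIntegrand_combination (hl : 0 < Q.l) {m' : ℝ}
    (h : poissonM α m Q μ ≠ ⊤) (h' : poissonM α m' Q μ ≠ ⊤) (a b c : ℝ) :
    ∫ y, c * (poissonIntegrand α m Q y / Q.l * a + poissonIntegrand α m' Q y / Q.l * b) ∂μ
      = c * ((poissonM α m Q μ).toReal / Q.l * a + (poissonM α m' Q μ).toReal / Q.l * b) := by
  rw [integral_const_mul,
    integral_add (((integrable_poissonIntegrand hl h).div_const _).mul_const _)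
      (((integrable_poissonIntegrand hl h').div_const _).mul_const _),
    integral_mul_const, integral_mul_const, integral_div, integral_div,
    integral_poissonIntegrand hl, integral_poissonIntegrand hl]

end Poisson

section Monotonicity

variable {n : ℕ} {α δ CCZ : ℝ} {K : EuclideanSpace ℝ (Fin n) → EuclideanSpace ℝ (Fin n) → ℝ}
  {J : QCube n} {x y m : EuclideanSpace ℝ (Fin n)}

open QCube

def monotonicityConst (n : ℕ) (α δ : ℝ) : ℝ :=
  2 * (2 * √n) ^ δ * separationConst n ^ (α - n - 1 - δ) + separationConst n ^ (α - n - 1)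

lemma monotonicityConst_pos (n : ℕ) (α δ : ℝ) : 0 < monotonicityConst n α δ := by
  have := separationConst_pos n
  unfold monotonicityConst; positivity

lemma abs_taylor_le_poissonIntegrand (hK : IsStandardKernel n α δ CCZ K) (hα : α ≤ n + 1)
    (hδ : 0 ≤ δ) (hCCZ : 0 ≤ CCZ) (hl : 0 < J.l) (hm : m ∈ J.closedPts) (hx : x ∈ J.closedPts)
    (hy : y ∉ (J.dilate 2).pts) :
    |K x y - K m y - fderiv ℝ (fun z => K z y) m (x - m)|
      ≤ monotonicityConst n α δ * CCZ * (poissonIntegrand α (1 + δ) J y / J.l) * ‖x - m‖ := by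
  set c := separationConst n
  set R := J.l + ‖y - J.center‖
  set e := α - n - 1 - δ
  have hc := separationConst_pos n
  have hR : 0 < R := add_pos_of_pos_of_nonneg hl (norm_nonneg _)
  have hdiam : 2 * ‖x - m‖ ≤ 2 * √n * J.l := by
    linarith [norm_sub_le_of_mem_closedPts hl.le hx hm]
  calc |K x y - K m y - fderiv ℝ (fun z => K z y) m (x - m)|
      ≤ 2 * CCZ * (2 * ‖x - m‖) ^ δ * (c * R) ^ e * ‖x - m‖ :=
        hK.abs_taylor_le hα hδ hCCZ J.convex_closedPts (by positivity)
          (fun z hz => separationConst_mul_le_norm_sub hl.le hz hy) hm hx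
    _ ≤ 2 * CCZ * (2 * √n * J.l) ^ δ * (c * R) ^ e * ‖x - m‖ := by gcongr
    _ = 2 * (2 * √n) ^ δ * c ^ e * CCZ * (J.l ^ δ * R ^ e) * ‖x - m‖ := by
        rw [Real.mul_rpow (by positivity) hl.le, Real.mul_rpow hc.le hR.le]; ring
    _ ≤ monotonicityConst n α δ * CCZ * (J.l ^ δ * R ^ e) * ‖x - m‖ := by
        gcongr
        exact le_add_of_nonneg_right (by positivity)
    _ = monotonicityConst n α δ * CCZ * (poissonIntegrand α (1 + δ) J y / J.l) * ‖x - m‖ := by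
        rw [poissonIntegrand_div_eq hl, show 1 + δ - 1 = δ by ring,
          show α - n - (1 + δ) = e by ring]

lemma norm_fderiv_le_poissonIntegrand (hK : IsStandardKernel n α δ CCZ K) (hα : α ≤ n + 1)
    (hCCZ : 0 ≤ CCZ) (hl : 0 < J.l) (hm : m ∈ J.closedPts)
    (hy : y ∉ (J.dilate 2).pts) :
    ‖fderiv ℝ (fun z => K z y) m‖
      ≤ monotonicityConst n α δ * CCZ * (poissonIntegrand α 1 J y / J.l) := by
  set c := separationConst n
  set R := J.l + ‖y - J.center‖
  have hc := separationConst_pos n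
  have hR : 0 < R := add_pos_of_pos_of_nonneg hl (norm_nonneg _)
  calc ‖fderiv ℝ (fun z => K z y) m‖ ≤ CCZ * (c * R) ^ (α - n - 1) :=
        hK.norm_fderiv_left_le hα hCCZ (by positivity) (separationConst_mul_le_norm_sub hl.le hm hy)
    _ = c ^ (α - n - 1) * CCZ * R ^ (α - n - 1) := by rw [Real.mul_rpow hc.le hR.le]; ring
    _ ≤ monotonicityConst n α δ * CCZ * R ^ (α - n - 1) := by
        gcongr
        exact le_add_of_nonneg_left (by positivity)
    _ = monotonicityConst n α δ * CCZ * (poissonIntegrand α 1 J y / J.l) := by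
        rw [poissonIntegrand_div_eq hl, sub_self, Real.rpow_zero, one_mul]

variable {ω : Measure (EuclideanSpace ℝ (Fin n))} {h : EuclideanSpace ℝ (Fin n) → ℝ}

lemma integrableOn_mul_of_notMem_dilate_two (hK : IsStandardKernel n α δ CCZ K) (hα : α ≤ n)
    (hCCZ : 0 ≤ CCZ) (hl : 0 < J.l) (hh : IntegrableOn h J.pts ω) (hy : y ∉ (J.dilate 2).pts) :
    IntegrableOn (fun x => K x y * h x) J.pts ω :=
  hK.integrableOn_mul hα hCCZ J.measurableSet_pts hh (half_pos hl)
    fun _ hx => half_le_norm_sub (J.pts_subset_closedPts hx) hy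

lemma integrableOn_sub_mul (hK : IsStandardKernel n α δ CCZ K) (hα : α ≤ n)
    (hCCZ : 0 ≤ CCZ) (hl : 0 < J.l) (hh : IntegrableOn h J.pts ω) (hy : y ∉ (J.dilate 2).pts) :
    IntegrableOn (fun x => (K x y - K m y) * h x) J.pts ω := by
  refine ((integrableOn_mul_of_notMem_dilate_two hK hα hCCZ hl hh hy).sub
    (hh.const_mul (K m y))).congr (ae_of_all _ fun x => ?_)
  simp only [Pi.sub_apply, sub_mul]

lemma setIntegral_sub_mul_eq (hK : IsStandardKernel n α δ CCZ K) (hα : α ≤ n)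
    (hCCZ : 0 ≤ CCZ) (hl : 0 < J.l) (hh : IntegrableOn h J.pts ω)
    (hh0 : ∫ x in J.pts, h x ∂ω = 0) (hy : y ∉ (J.dilate 2).pts) :
    ∫ x in J.pts, (K x y - K m y) * h x ∂ω = ∫ x in J.pts, K x y * h x ∂ω := by
  simp only [sub_mul]
  rw [integral_sub (integrableOn_mul_of_notMem_dilate_two hK hα hCCZ hl hh hy)
    (hh.const_mul _), integral_const_mul, hh0, mul_zero, sub_zero]

lemma abs_setIntegral_sub_mul_le (hK : IsStandardKernel n α δ CCZ K) (hα : α ≤ n) (hδ : 0 ≤ δ)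
    (hCCZ : 0 ≤ CCZ) (hl : 0 < J.l) (hm : m ∈ J.closedPts) (hh : IntegrableOn h J.pts ω)
    (hy : y ∉ (J.dilate 2).pts) :
    |∫ x in J.pts, (K x y - K m y) * h x ∂ω|
      ≤ monotonicityConst n α δ * CCZ *
        (poissonIntegrand α 1 J y / J.l * ‖∫ x in J.pts, h x • (x - m) ∂ω‖
          + poissonIntegrand α (1 + δ) J y / J.l * ∫ x in J.pts, ‖x - m‖ * |h x| ∂ω) := by
  set C := monotonicityConst n α δ
  set φ := fderiv ℝ (fun z => K z y) m
  have hdiam : ∀ᵐ x ∂ω.restrict J.pts, ‖x - m‖ ≤ √n * J.l :=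
    ae_restrict_of_forall_mem J.measurableSet_pts fun x hx =>
      norm_sub_le_of_mem_closedPts hl.le (J.pts_subset_closedPts hx) hm
  have hmeas : AEStronglyMeasurable (fun x => x - m) (ω.restrict J.pts) := by fun_prop
  have hIntV : Integrable (fun x => h x • (x - m)) (ω.restrict J.pts) :=
    hh.smul_bdd _ hmeas hdiam
  have hIntW : Integrable (fun x => ‖x - m‖ * |h x|) (ω.restrict J.pts) :=
    hh.abs.bdd_mul hmeas.norm (hdiam.mono fun x hx => by rwa [norm_norm])
  have hIntK := integrableOn_sub_mul (m := m) hK hα hCCZ hl hh hy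
  have hsplit : ∫ x in J.pts, (K x y - K m y) * h x ∂ω
      = ∫ x in J.pts, ((K x y - K m y) * h x - φ (h x • (x - m))) ∂ω
        + φ (∫ x in J.pts, h x • (x - m) ∂ω) := by
    rw [integral_sub hIntK (φ.integrable_comp hIntV), φ.integral_comp_comm hIntV, sub_add_cancel]
  have hrem : |∫ x in J.pts, ((K x y - K m y) * h x - φ (h x • (x - m))) ∂ω|
      ≤ C * CCZ * (poissonIntegrand α (1 + δ) J y / J.l) * ∫ x in J.pts, ‖x - m‖ * |h x| ∂ω := by
    rw [← integral_const_mul, ← Real.norm_eq_abs]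
    refine norm_integral_le_of_norm_le (hIntW.const_mul _)
      ((ae_restrict_iff' J.measurableSet_pts).mpr (ae_of_all _ fun x hx => ?_))
    have hTaylor := abs_taylor_le_poissonIntegrand hK (by linarith) hδ hCCZ hl hm
      (J.pts_subset_closedPts hx) hy
    calc ‖(K x y - K m y) * h x - φ (h x • (x - m))‖
        = |K x y - K m y - φ (x - m)| * |h x| := by
          rw [map_smul, smul_eq_mul, Real.norm_eq_abs, ← abs_mul]; ring_nf
      _ ≤ C * CCZ * (poissonIntegrand α (1 + δ) J y / J.l) * ‖x - m‖ * |h x| := by gcongr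
      _ = C * CCZ * (poissonIntegrand α (1 + δ) J y / J.l) * (‖x - m‖ * |h x|) := by ring
  have hlin : |φ (∫ x in J.pts, h x • (x - m) ∂ω)|
      ≤ C * CCZ * (poissonIntegrand α 1 J y / J.l) * ‖∫ x in J.pts, h x • (x - m) ∂ω‖ := by
    rw [← Real.norm_eq_abs]
    exact (φ.le_opNorm _).trans (mul_le_mul_of_nonneg_right
      (norm_fderiv_le_poissonIntegrand hK (by linarith) hCCZ hl hm hy) (norm_nonneg _))
  rw [hsplit]
  refine (abs_add_le _ _).trans ?_
  linarith

end Monotonicity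

theorem statement7_general (n : ℕ) (α δ : ℝ) (hαn : α < n) (hδ0 : 0 < δ) :
    ∃ C : ℝ, 0 < C ∧
      ∀ CCZ : ℝ, 0 < CCZ →
      ∀ K : EuclideanSpace ℝ (Fin n) → EuclideanSpace ℝ (Fin n) → ℝ,
        IsStandardKernel n α δ CCZ K →
      ∀ ω μ : Measure (EuclideanSpace ℝ (Fin n)),
        IsLocallyFiniteMeasure ω → IsLocallyFiniteMeasure μ →
      ∀ J : QCube n, 0 < J.l → ω J.pts ≠ 0 → ω J.pts ≠ ⊤ →
        -- `supp μ ∩ 2J = ∅` : every point of `2J` has a `μ`-null neighborhood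
        (∀ x ∈ (J.dilate 2).pts, ∃ U ∈ nhds x, μ U = 0) →
        poissonM α 1 J μ ≠ ⊤ →
      ∀ h : EuclideanSpace ℝ (Fin n) → ℝ,
        MemLp h 2 ω → Function.support h ⊆ J.pts → (∫ x, h x ∂ω) = 0 →
        (∀ y ∉ (J.dilate 2).pts,
          IntegrableOn (fun x => (K x y - K (wMean ω J) y) * h x) J.pts ω) ∧
        Integrable (fun y => ∫ x in J.pts, (K x y - K (wMean ω J) y) * h x ∂ω) μ ∧
        |∫ y, (∫ x in J.pts, (K x y - K (wMean ω J) y) * h x ∂ω) ∂μ|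
          ≤ C * CCZ *
            ((poissonM α 1 J μ).toReal / J.l
                * ‖∫ x in J.pts, h x • (x - wMean ω J) ∂ω‖
              + (poissonM α (1 + δ) J μ).toReal / J.l
                * ∫ x in J.pts, ‖x - wMean ω J‖ * |h x| ∂ω) ∧
        ((∫⁻ y, ENNReal.ofReal ((J.l + dist y J.center) ^ (α - (n : ℝ))) ∂μ) ≠ ⊤ →
          (∫ y, (∫ x in J.pts, (K x y - K (wMean ω J) y) * h x ∂ω) ∂μ)
            = ∫ y, (∫ x in J.pts, K x y * h x ∂ω) ∂μ) := by
  refine ⟨monotonicityConst n α δ, monotonicityConst_pos n α δ, ?_⟩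
  intro CCZ hCCZ K hK ω μ _ _ J hl hω0 hωt hsupp hP1 h hh hsupph hint0
  have hα : α ≤ n := hαn.le
  have hhJ : IntegrableOn h J.pts ω := by
    have := Fact.mk hωt.lt_top
    exact (hh.restrict J.pts).integrable one_le_two
  have hhJ0 : ∫ x in J.pts, h x ∂ω = 0 := by
    rwa [setIntegral_eq_integral_of_forall_compl_eq_zero fun x hx =>
      Function.notMem_support.mp fun hx' => hx (hsupph hx')]
  have hae : ∀ᵐ y ∂μ, y ∉ (J.dilate 2).pts := ae_notMem_of_locally_null hsupp
  have hcancel : ∀ᵐ y ∂μ, ∫ x in J.pts, (K x y - K (wMean ω J) y) * h x ∂ω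
      = ∫ x in J.pts, K x y * h x ∂ω :=
    hae.mono fun y hy => setIntegral_sub_mul_eq hK hα hCCZ.le hl hhJ hhJ0 hy
  have hmeas := (hK.aestronglyMeasurable_setIntegral_mul hα hCCZ.le J.measurableSet_pts hhJ
    (hae.mono fun y hy => QCube.notMem_closure_pts hl hy)).congr (hcancel.mono fun y hy => hy.symm)
  have hP2 := poissonM_ne_top_of_le hl (by linarith : (1 : ℝ) ≤ 1 + δ) hP1
  have hbound := integrable_poissonIntegrand_combination hl hP1 hP2
    ‖∫ x in J.pts, h x • (x - wMean ω J) ∂ω‖ (∫ x in J.pts, ‖x - wMean ω J‖ * |h x| ∂ω)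
    (monotonicityConst n α δ * CCZ)
  have hle := hae.mono fun y hy => (Real.norm_eq_abs _).trans_le <|
    abs_setIntegral_sub_mul_le hK hα hδ0.le hCCZ.le hl (wMean_mem_closedPts hl.le hω0 hωt) hhJ hy
  refine ⟨fun y hy => integrableOn_sub_mul hK hα hCCZ.le hl hhJ hy, hbound.mono' hmeas hle,
    ?_, fun _ => integral_congr_ae hcancel⟩
  exact (norm_integral_le_of_norm_le hbound hle).trans_eq
    (integral_poissonIntegrand_combination hl hP1 hP2 _ _ _)

/-- **Monotonicity Lemma.** For an `α`-standard fractional kernel `K` of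
order `1+δ`, a cube `J` with `0 < ω(J) < ∞`, and a positive measure `μ` with
`supp μ ∩ 2J = ∅` and `P^α(J,μ) < ∞`, every mean-zero `h ∈ L²(ω)` supported in `J`
satisfies: the iterated integral `∫ (∫_J (K(x,y) − K(m_J,y)) h(x) dω(x)) dμ(y)` converges
absolutely and is at most
`C·C_CZ·[P^α(J,μ)/ℓ(J) · |∫_J (x−m_J) h dω| + P^α_{1+δ}(J,μ)/ℓ(J) · ∫_J |x−m_J||h| dω]`,
with `C = C(n,α,δ)`; moreover when `∫ (ℓ(J)+|y−c_J|)^{α−n} dμ(y) < ∞` it equals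
`∫∫ K(x,y) h(x) dω(x) dμ(y)`. -/
theorem statement7 (n : ℕ) (α δ : ℝ) (hn : 1 ≤ n) (hα0 : 0 ≤ α) (hαn : α < n)
    (hδ0 : 0 < δ) (hδ1 : δ ≤ 1) :
    ∃ C : ℝ, 0 < C ∧
      ∀ CCZ : ℝ, 0 < CCZ →
      ∀ K : EuclideanSpace ℝ (Fin n) → EuclideanSpace ℝ (Fin n) → ℝ,
        IsStandardKernel n α δ CCZ K →
      ∀ ω μ : Measure (EuclideanSpace ℝ (Fin n)),
        IsLocallyFiniteMeasure ω → IsLocallyFiniteMeasure μ →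
      ∀ J : QCube n, 0 < J.l → ω J.pts ≠ 0 → ω J.pts ≠ ⊤ →
        -- `supp μ ∩ 2J = ∅` : every point of `2J` has a `μ`-null neighborhood
        (∀ x ∈ (J.dilate 2).pts, ∃ U ∈ nhds x, μ U = 0) →
        poissonM α 1 J μ ≠ ⊤ →
      ∀ h : EuclideanSpace ℝ (Fin n) → ℝ,
        MemLp h 2 ω → Function.support h ⊆ J.pts → (∫ x, h x ∂ω) = 0 →
        (∀ y ∉ (J.dilate 2).pts,
          IntegrableOn (fun x => (K x y - K (wMean ω J) y) * h x) J.pts ω) ∧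
        Integrable (fun y => ∫ x in J.pts, (K x y - K (wMean ω J) y) * h x ∂ω) μ ∧
        |∫ y, (∫ x in J.pts, (K x y - K (wMean ω J) y) * h x ∂ω) ∂μ|
          ≤ C * CCZ *
            ((poissonM α 1 J μ).toReal / J.l
                * ‖∫ x in J.pts, h x • (x - wMean ω J) ∂ω‖
              + (poissonM α (1 + δ) J μ).toReal / J.l
                * ∫ x in J.pts, ‖x - wMean ω J‖ * |h x| ∂ω) ∧
        ((∫⁻ y, ENNReal.ofReal ((J.l + dist y J.center) ^ (α - (n : ℝ))) ∂μ) ≠ ⊤ →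
          (∫ y, (∫ x in J.pts, (K x y - K (wMean ω J) y) * h x ∂ω) ∂μ)
            = ∫ y, (∫ x in J.pts, K x y * h x ∂ω) ∂μ) :=
  statement7_general n α δ hαn hδ0
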